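/- (Weak maximum principle) Let ν be a symmetric Lévy measure on ℝⁿ with ν(ℝⁿ∖{0}) > 0 and Ω ⊆ ℝⁿ a nonempty bounded open set. If u is a weak solution of Lu = f in Ω, u = g on ℝⁿ∖Ω with f ≥ 0 a.e. on Ω and g ≥ 0 a.e. on ℝⁿ∖Ω, then u ≥ 0 a.e. on ℝⁿ. -/

import Mathlib

open MeasureTheory Filter Set Topology
open scoped ENNReal Topology Pointwise Classical

noncomputable section

abbrev Eucl (n : ℕ) : Type := EuclideanSpace ℝ (Fin n)

/-- A symmetric Lévy measure on ℝⁿ: ν({0}) = 0, ν(−A) = ν(A) for Borel A, and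
∫ min(1,|y|²) dν < ∞. -/
def IsSymmLevy {n : ℕ} (ν : Measure (Eucl n)) : Prop :=
  ν {0} = 0 ∧ (∀ A : Set (Eucl n), MeasurableSet A → ν (-A) = ν A) ∧
    (∫⁻ y, ENNReal.ofReal (min 1 (‖y‖ ^ 2)) ∂ν) < ⊤

/-- The truncated nonlocal operator: ∫_{|y| ≥ ε} (u(x) − u(x+y)) dν(y). -/
def truncL {n : ℕ} (ν : Measure (Eucl n)) (u : Eucl n → ℝ) (x : Eucl n) (ε : ℝ) : ℝ :=
  ∫ y in {y : Eucl n | ε ≤ ‖y‖}, (u x - u (x + y)) ∂ν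

/-- `Lu(x)` is well defined with value `l`: the integrands are ν-integrable away from the
origin, and the principal value limit exists and equals `l`. -/
def HasLAt {n : ℕ} (ν : Measure (Eucl n)) (u : Eucl n → ℝ) (x : Eucl n) (l : ℝ) : Prop :=
  (∀ ε : ℝ, 0 < ε → IntegrableOn (fun y => u x - u (x + y)) {y : Eucl n | ε ≤ ‖y‖} ν) ∧
  Tendsto (truncL ν u x) (𝓝[>] (0:ℝ)) (𝓝 l)

/-- Squared norm of the generalized Sobolev space V_ν^D(ℝⁿ). -/
def sobSq {n : ℕ} (ν : Measure (Eucl n)) (D : Set (Eucl n)) (u : Eucl n → ℝ) : ℝ≥0∞ :=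
  (∫⁻ x in D, ENNReal.ofReal (u x ^ 2)) +
    (1/2) * ∫⁻ y in D, ∫⁻ z, ENNReal.ofReal ((u y - u (y + z)) ^ 2) ∂ν

/-- Membership in V_ν^D(ℝⁿ). -/
def MemV {n : ℕ} (ν : Measure (Eucl n)) (D : Set (Eucl n)) (u : Eucl n → ℝ) : Prop :=
  Measurable u ∧ sobSq ν D u < ⊤

/-- Membership in H_ν^D(ℝⁿ): members of V_ν^D vanishing a.e. outside D. -/
def MemH {n : ℕ} (ν : Measure (Eucl n)) (D : Set (Eucl n)) (u : Eucl n → ℝ) : Prop :=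
  MemV ν D u ∧ ∀ᵐ x ∂(volume : Measure (Eucl n)), x ∉ D → u x = 0

/-- The quadratic form ⟨u,u⟩_ν (with values in [0,∞]). -/
def formQ {n : ℕ} (ν : Measure (Eucl n)) (u : Eucl n → ℝ) : ℝ≥0∞ :=
  (1/2) * ∫⁻ y, ∫⁻ z, ENNReal.ofReal ((u y - u (y + z)) ^ 2) ∂ν

/-- The bilinear form ⟨u,v⟩_ν. -/
def formB {n : ℕ} (ν : Measure (Eucl n)) (u v : Eucl n → ℝ) : ℝ :=
  (1/2) * ∫ y, (∫ z, (u y - u (y + z)) * (v y - v (y + z)) ∂ν)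

/-- Weak solution of Lu = f in Ω, u = g on ℝⁿ∖Ω. -/
def IsWeakSol {n : ℕ} (ν : Measure (Eucl n)) (Ω : Set (Eucl n))
    (f g u : Eucl n → ℝ) : Prop :=
  MemV ν Ω u ∧ (∀ᵐ x ∂(volume : Measure (Eucl n)), x ∉ Ω → u x = g x) ∧
  ∀ φ : Eucl n → ℝ, MemH ν Ω φ → formB ν u φ = ∫ x in Ω, f x * φ x

end

/-!
Test the weak formulation with `w = u⁻`, which lies in `H_ν^Ω` because the negative part is a
normal contraction and `u = g ≥ 0` outside `Ω`. Pointwise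
`(u y - u (y + z)) (w y - w (y + z)) ≤ -(w y - w (y + z))²`, so
`0 ≤ ∫_Ω f w = ⟨u, w⟩_ν ≤ -½ ∫∫ (w y - w (y + z))² ≤ 0`; the double integral converges absolutely
since, by the symmetry of `ν`, its part with `y ∉ Ω` is controlled by its part with `y ∈ Ω`.
Hence `w (· + z) = w` a.e. for `ν`-a.e. `z`. As `ν` charges `{0}ᶜ`, `w` has a nonzero a.e. period,
and a function with a nonzero period that vanishes outside a bounded set vanishes.
-/

open Function

lemma sq_negPart_sub_negPart_le (a b : ℝ) : (a⁻ - b⁻) ^ 2 ≤ (b - a) * (a⁻ - b⁻) := by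
  simp only [negPart, max_def]
  split_ifs <;> nlinarith

lemma sq_sub_le_sq_sub_of_lipschitzWith_one {φ : ℝ → ℝ} (hφ : LipschitzWith 1 φ) (a b : ℝ) :
    (φ a - φ b) ^ 2 ≤ (a - b) ^ 2 := by
  have h := hφ.dist_le_mul a b
  rw [NNReal.coe_one, one_mul, Real.dist_eq, Real.dist_eq] at h
  exact sq_le_sq.2 h

lemma sFinite_of_lintegral_lt_top {α : Type*} [MeasurableSpace α] {ν : Measure α}
    {f : α → ℝ≥0∞} (hf : Measurable f) (hf0 : ∀ᵐ x ∂ν, f x ≠ 0)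
    (hfin : ∫⁻ x, f x ∂ν < ∞) : SFinite ν := by
  have : IsFiniteMeasure (ν.withDensity f) := isFiniteMeasure_withDensity hfin.ne
  rw [← withDensity_inv_same hf hf0 (ae_lt_top hf hfin.ne |>.mono fun _ hx => hx.ne)]
  infer_instance

namespace IsSymmLevy

variable {n : ℕ} {ν : Measure (Eucl n)}

lemma sFinite (hν : IsSymmLevy ν) : SFinite ν := by
  refine sFinite_of_lintegral_lt_top (by fun_prop) ?_ hν.2.2
  filter_upwards [measure_eq_zero_iff_ae_notMem.1 hν.1] with y hy
  have : 0 < ‖y‖ := norm_pos_iff.2 hy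
  simp only [ne_eq, ENNReal.ofReal_eq_zero, not_le, lt_min_iff]
  exact ⟨one_pos, by positivity⟩

lemma isNegInvariant (hν : IsSymmLevy ν) : ν.IsNegInvariant :=
  ⟨Measure.ext fun A hA => by rw [Measure.neg_apply, hν.2.1 A hA]⟩

end IsSymmLevy

section SymmetricKernel

variable {G : Type*} [MeasurableSpace G] [AddGroup G] [MeasurableAdd₂ G] [MeasurableNeg G]
  (μ ν : Measure G) [SFinite μ] [SFinite ν] [μ.IsAddRightInvariant] [ν.IsNegInvariant]
  {Φ : G → G → ℝ≥0∞}

lemma lintegral_prod_comp_add_swap (hΦ : Measurable (uncurry Φ)) :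
    ∫⁻ p, Φ p.1 (p.1 + p.2) ∂μ.prod ν = ∫⁻ p, Φ (p.1 + p.2) p.1 ∂μ.prod ν := by
  have hT : MeasurePreserving (fun p : G × G => (p.1 + p.2, -p.2)) (μ.prod ν) (μ.prod ν) :=
    ((MeasurePreserving.id μ).prod (Measure.measurePreserving_neg ν)).comp
      (measurePreserving_add_prod μ ν)
  have hΦ' : Measurable fun p : G × G => Φ p.1 (p.1 + p.2) := by fun_prop
  rw [← hT.lintegral_comp hΦ']
  simp only [add_neg_cancel_right]

/-- The part with base point outside `s` is at most the part with `y + z ∈ s`, which the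
substitution `(y, z) ↦ (y + z, -z)` turns into the part with base point in `s`. -/
lemma lintegral_prod_le_two_mul_lintegral_restrict_prod {s : Set G} (hs : MeasurableSet s)
    (hΦ : Measurable (uncurry Φ)) (hsymm : ∀ a b, Φ a b = Φ b a)
    (hzero : ∀ a ∉ s, ∀ b ∉ s, Φ a b = 0) :
    ∫⁻ p, Φ p.1 (p.1 + p.2) ∂μ.prod ν ≤ 2 * ∫⁻ p, Φ p.1 (p.1 + p.2) ∂(μ.restrict s).prod ν := by
  set A : G × G → ℝ≥0∞ := (s ×ˢ univ).indicator fun p => Φ p.1 (p.1 + p.2)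
  have hA : ∫⁻ p, A p ∂μ.prod ν = ∫⁻ p, Φ p.1 (p.1 + p.2) ∂(μ.restrict s).prod ν := by
    rw [lintegral_indicator (hs.prod .univ), ← Measure.prod_restrict, Measure.restrict_univ]
  have hB :
      ∫⁻ p, s.indicator (fun b => Φ b p.1) (p.1 + p.2) ∂μ.prod ν = ∫⁻ p, A p ∂μ.prod ν := by
    rw [lintegral_prod_comp_add_swap μ ν (Φ := fun a b => s.indicator (fun b => Φ b a) b)
      ((hΦ.comp measurable_swap).indicator (measurable_snd hs))]
    congr 1 with ⟨y, z⟩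
    by_cases hy : y ∈ s <;> simp [A, hy]
  have hpt : ∀ p : G × G,
      Φ p.1 (p.1 + p.2) ≤ A p + s.indicator (fun b => Φ b p.1) (p.1 + p.2) := by
    rintro ⟨y, z⟩
    by_cases hy : y ∈ s
    · simp [A, hy]
    by_cases hyz : y + z ∈ s
    · simp [hyz, hsymm y]
    · simp [hzero y hy _ hyz]
  calc ∫⁻ p, Φ p.1 (p.1 + p.2) ∂μ.prod ν
      ≤ ∫⁻ p, A p + s.indicator (fun b => Φ b p.1) (p.1 + p.2) ∂μ.prod ν := lintegral_mono hpt
    _ = 2 * ∫⁻ p, Φ p.1 (p.1 + p.2) ∂(μ.restrict s).prod ν := by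
      rw [lintegral_add_left ((by fun_prop : Measurable _).indicator (hs.prod .univ)), hB, hA,
        two_mul]

end SymmetricKernel

lemma ae_add_nsmul_eq {G β : Type*} [MeasurableSpace G] [AddMonoid G] [MeasurableAdd G]
    {μ : Measure G} [μ.IsAddRightInvariant] {w : G → β} {z : G}
    (hper : ∀ᵐ y ∂μ, w (y + z) = w y) (k : ℕ) : ∀ᵐ y ∂μ, w (y + k • z) = w y := by
  induction k with
  | zero => simp
  | succ k ih =>
    filter_upwards [ih, (measurePreserving_add_right μ (k • z)).quasiMeasurePreserving.ae hper]
      with y hk hstep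
    rwa [succ_nsmul, ← add_assoc, hstep]

lemma ae_eq_zero_of_ae_add_eq_of_isBounded {E β : Type*} [NormedAddCommGroup E]
    [NormedSpace ℝ E] [MeasurableSpace E] [MeasurableAdd E] {μ : Measure E}
    [μ.IsAddRightInvariant] [Zero β] {w : E → β} {s : Set E} (hs : Bornology.IsBounded s)
    {z : E} (hz : z ≠ 0) (hper : ∀ᵐ y ∂μ, w (y + z) = w y) (hw : ∀ᵐ y ∂μ, y ∉ s → w y = 0) :
    ∀ᵐ y ∂μ, w y = 0 := by
  obtain ⟨C, hC⟩ := Metric.isBounded_iff.1 hs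
  obtain ⟨k, hk⟩ := exists_nat_gt (C / ‖z‖)
  have hfar : ∀ y ∈ s, y + k • z ∉ s := fun y hy hyk => by
    have := hC hyk hy
    rw [dist_eq_norm, add_sub_cancel_left, RCLike.norm_nsmul ℝ, nsmul_eq_mul] at this
    rw [div_lt_iff₀ (norm_pos_iff.2 hz)] at hk
    linarith
  filter_upwards [hw, ae_add_nsmul_eq hper k,
    (measurePreserving_add_right μ (k • z)).quasiMeasurePreserving.ae hw] with y hy hyk hw'
  by_cases hys : y ∈ s
  · rw [← hyk, hw' (hfar y hys)]
  · exact hy hys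

section Energy

variable {n : ℕ} {ν : Measure (Eucl n)} {D : Set (Eucl n)} {u v : Eucl n → ℝ}

lemma sobSq_comp_le {φ : ℝ → ℝ} (hφ : LipschitzWith 1 φ) (hφ0 : φ 0 = 0) :
    sobSq ν D (fun x => φ (u x)) ≤ sobSq ν D u := by
  have hsq := sq_sub_le_sq_sub_of_lipschitzWith_one hφ
  refine add_le_add (lintegral_mono fun x => ENNReal.ofReal_le_ofReal ?_)
    (mul_le_mul_right (lintegral_mono fun y => lintegral_mono fun z =>
      ENNReal.ofReal_le_ofReal (hsq _ _)) _)
  simpa [hφ0] using hsq (u x) 0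

lemma MemV.memH_comp (hu : MemV ν D u) {φ : ℝ → ℝ} (hφ : LipschitzWith 1 φ) (hφ0 : φ 0 = 0)
    (hD : ∀ᵐ x, x ∉ D → φ (u x) = 0) : MemH ν D (fun x => φ (u x)) :=
  ⟨⟨hφ.continuous.measurable.comp hu.1, (sobSq_comp_le hφ hφ0).trans_lt hu.2⟩, hD⟩

lemma MemV.lintegral_prod_lt_top [SFinite ν] (hu : MemV ν D u) :
    ∫⁻ p, ENNReal.ofReal ((u p.1 - u (p.1 + p.2)) ^ 2) ∂(volume.restrict D).prod ν < ∞ := by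
  have hmeas := hu.1
  rw [lintegral_prod _ (by fun_prop)]
  refine ENNReal.lt_top_of_mul_ne_top_right ?_ (by norm_num : (1 / 2 : ℝ≥0∞) ≠ 0)
  exact ne_top_of_le_ne_top hu.2.ne le_add_self

lemma integrable_mul_sub_of_memV_of_memH [SFinite ν] [ν.IsNegInvariant] (hD : MeasurableSet D)
    (hu : MemV ν D u) (hv : MemH ν D v) :
    Integrable (fun p => (u p.1 - u (p.1 + p.2)) * (v p.1 - v (p.1 + p.2))) (volume.prod ν) := by
  have hum := hu.1
  have hvm := hv.1.1
  set Φ : Eucl n → Eucl n → ℝ≥0∞ := fun a b => ENNReal.ofReal (|u a - u b| * |v a - v b|)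
  -- enlarge `D` by a null set so that `v` vanishes everywhere outside it
  set D' := D ∪ {x | v x ≠ 0}
  have hD' : MeasurableSet D' := hD.union (measurableSet_eq_fun hvm measurable_const).compl
  have hD'D : D' =ᵐ[volume] D := union_ae_eq_left_iff_ae_subset.2 <| by
    filter_upwards [hv.2] with x hx hvx
    by_contra hxD
    exact hvx (hx hxD)
  have hΦzero : ∀ a ∉ D', ∀ b ∉ D', Φ a b = 0 := fun a ha b hb => by
    simp only [D', mem_union, mem_ofPred_eq, not_or, not_not] at ha hb
    simp [Φ, ha.2, hb.2]
  have hΦle : ∀ a b, Φ a b ≤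
      ENNReal.ofReal ((u a - u b) ^ 2) + ENNReal.ofReal ((v a - v b) ^ 2) := fun a b => by
    rw [← ENNReal.ofReal_add (sq_nonneg _) (sq_nonneg _)]
    refine ENNReal.ofReal_le_ofReal ?_
    nlinarith [sq_abs (u a - u b), sq_abs (v a - v b), sq_nonneg (|u a - u b| - |v a - v b|),
      mul_nonneg (abs_nonneg (u a - u b)) (abs_nonneg (v a - v b))]
  refine ⟨by fun_prop, hasFiniteIntegral_iff_norm _ |>.2 ?_⟩
  calc ∫⁻ p, ENNReal.ofReal ‖(u p.1 - u (p.1 + p.2)) * (v p.1 - v (p.1 + p.2))‖ ∂volume.prod ν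
      = ∫⁻ p, Φ p.1 (p.1 + p.2) ∂volume.prod ν := by simp [Φ]
    _ ≤ 2 * ∫⁻ p, Φ p.1 (p.1 + p.2) ∂(volume.restrict D').prod ν :=
      lintegral_prod_le_two_mul_lintegral_restrict_prod _ _ hD' (by fun_prop)
        (fun a b => by simp only [Φ, abs_sub_comm]) hΦzero
    _ ≤ 2 * ∫⁻ p, ENNReal.ofReal ((u p.1 - u (p.1 + p.2)) ^ 2) +
          ENNReal.ofReal ((v p.1 - v (p.1 + p.2)) ^ 2) ∂(volume.restrict D).prod ν := by
      rw [Measure.restrict_congr_set hD'D]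
      exact mul_le_mul_right (lintegral_mono fun p => hΦle _ _) _
    _ < ∞ := by
      rw [lintegral_add_left (by fun_prop)]
      exact ENNReal.mul_lt_top (by norm_num)
        (ENNReal.add_lt_top.2 ⟨hu.lintegral_prod_lt_top, hv.1.lintegral_prod_lt_top⟩)

lemma formB_eq_integral_prod [SFinite ν] [ν.IsNegInvariant] (hD : MeasurableSet D)
    (hu : MemV ν D u) (hv : MemH ν D v) :
    formB ν u v =
      1 / 2 * ∫ p, (u p.1 - u (p.1 + p.2)) * (v p.1 - v (p.1 + p.2)) ∂volume.prod ν := by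
  rw [formB, integral_prod _ (integrable_mul_sub_of_memV_of_memH hD hu hv)]

end Energy

lemma ae_ae_negPart_add_eq {G : Type*} [MeasurableSpace G] [Add G] [MeasurableAdd₂ G]
    {μ ν : Measure G} [SFinite μ] [SFinite ν] {u : G → ℝ} (hu : Measurable u)
    (hint : Integrable (fun p => (u p.1 - u (p.1 + p.2)) * ((u p.1)⁻ - (u (p.1 + p.2))⁻))
      (μ.prod ν))
    (hnonneg : 0 ≤ ∫ p, (u p.1 - u (p.1 + p.2)) * ((u p.1)⁻ - (u (p.1 + p.2))⁻) ∂μ.prod ν) :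
    ∀ᵐ z ∂ν, ∀ᵐ y ∂μ, (u (y + z))⁻ = (u y)⁻ := by
  set F := fun p : G × G => (u p.1 - u (p.1 + p.2)) * ((u p.1)⁻ - (u (p.1 + p.2))⁻)
  have hF : ∀ p, ((u p.1)⁻ - (u (p.1 + p.2))⁻) ^ 2 ≤ -F p := fun p => by
    have := sq_negPart_sub_negPart_le (u p.1) (u (p.1 + p.2))
    simp only [F]
    linarith
  have hnegF : 0 ≤ -F := fun p => (sq_nonneg _).trans (hF p)
  have hF0 : -F =ᵐ[μ.prod ν] 0 := by
    refine (integral_eq_zero_iff_of_nonneg hnegF hint.neg).1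
      (le_antisymm ?_ (integral_nonneg hnegF))
    rw [integral_neg']
    linarith
  have hprod : ∀ᵐ p ∂μ.prod ν, (u (p.1 + p.2))⁻ = (u p.1)⁻ := hF0.mono fun p hp => by
    have := hF p
    rw [show -F p = 0 from hp] at this
    nlinarith [sq_nonneg ((u p.1)⁻ - (u (p.1 + p.2))⁻)]
  have hmeas : MeasurableSet {p : G × G | (u (p.1 + p.2))⁻ = (u p.1)⁻} :=
    measurableSet_eq_fun (by fun_prop) (by fun_prop)
  exact (Measure.ae_ae_comm hmeas).1 (Measure.ae_ae_of_ae_prod hprod)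

theorem dirichlet_stmt13_general {n : ℕ} (ν : Measure (Eucl n)) (hν : IsSymmLevy ν)
    (hν0 : 0 < ν ({0}ᶜ : Set (Eucl n)))
    (Ω : Set (Eucl n)) (hΩo : IsOpen Ω)
    (hΩb : Bornology.IsBounded Ω)
    (f g u : Eucl n → ℝ)
    (hf : ∀ᵐ x ∂((volume : Measure (Eucl n)).restrict Ω), 0 ≤ f x)
    (hg : ∀ᵐ x ∂(volume : Measure (Eucl n)), x ∉ Ω → 0 ≤ g x)
    (hu : IsWeakSol ν Ω f g u) :
    ∀ᵐ x ∂(volume : Measure (Eucl n)), 0 ≤ u x := by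
  have := hν.sFinite
  have := hν.isNegInvariant
  obtain ⟨huV, hug, hweak⟩ := hu
  have hw0 : ∀ᵐ x, x ∉ Ω → (u x)⁻ = 0 := by
    filter_upwards [hug, hg] with x hux hgx hx
    rw [negPart_eq_zero, hux hx]
    exact hgx hx
  have hwH := huV.memH_comp lipschitzWith_negPart negPart_zero hw0
  have htest := hweak _ hwH
  rw [formB_eq_integral_prod hΩo.measurableSet huV hwH] at htest
  have hfw : 0 ≤ ∫ x in Ω, f x * (u x)⁻ :=
    integral_nonneg_of_ae (hf.mono fun x hx => mul_nonneg hx (negPart_nonneg _))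
  obtain ⟨z, hz, hper⟩ := Measure.exists_mem_of_measure_ne_zero_of_ae hν0.ne' <|
    ae_restrict_of_ae <| ae_ae_negPart_add_eq huV.1
      (integrable_mul_sub_of_memV_of_memH hΩo.measurableSet huV hwH) (by linarith)
  filter_upwards [ae_eq_zero_of_ae_add_eq_of_isBounded hΩb hz hper hw0] with x hx
  exact negPart_eq_zero.1 hx

theorem dirichlet_stmt13 {n : ℕ} (ν : Measure (Eucl n)) (hν : IsSymmLevy ν)
    (hν0 : 0 < ν ({0}ᶜ : Set (Eucl n)))
    (Ω : Set (Eucl n)) (hΩo : IsOpen Ω) (hΩne : Ω.Nonempty)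
    (hΩb : Bornology.IsBounded Ω)
    (f g u : Eucl n → ℝ)
    (hf : ∀ᵐ x ∂((volume : Measure (Eucl n)).restrict Ω), 0 ≤ f x)
    (hg : ∀ᵐ x ∂(volume : Measure (Eucl n)), x ∉ Ω → 0 ≤ g x)
    (hu : IsWeakSol ν Ω f g u) :
    ∀ᵐ x ∂(volume : Measure (Eucl n)), 0 ≤ u x :=
  dirichlet_stmt13_general ν hν hν0 Ω hΩo hΩb f g u hf hg hu
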